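/- Let A, A' be information systems with witnesses and H ⊆ Con × A' satisfy conditions (2), (3), (8) of approximable mappings. Then the conjunction of the left interpolation condition (4) and the conservativity condition (9) is equivalent to: for all (i,X) ∈ Con and finite F ⊆ A', (i,X) H F implies there exists (c,U) ∈ Con with (i,X) ⊢ (c,U) and (c,U) H F. -/

import Mathlib

/-
Given (4), the interpolants of the finitely many `b ∈ F` merge, by (2), into one set `U`
entailed by `(i, X)`; the witness `e` that the information system provides for `U` satisfies
`{e} ∈ Con(i)`, so (9) moves `U H F` from `i` to `e`. Conversely, the extended rule gives
`(c, U)` with `{c} ∈ Con(i)`, and (8) moves `U H b` from `c` back to `i`; for (9), apply the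
extended rule at `j` and transfer `(j, X) ⊢ (c, U)` to `i` by the witness axiom (11), then use (3).
-/

/-- The way-below (approximation) relation in a preorder: `x` approximates `y` if
for every directed set `S` whose least upper bound exists, `y ≤ sup S` implies
`x ≤ u` for some `u ∈ S`. -/
def wayBelow {α : Type*} [Preorder α] (x y : α) : Prop :=
  ∀ S : Set α, DirectedOn (· ≤ ·) S → S.Nonempty →
    ∀ l, IsLUB S l → y ≤ l → ∃ u ∈ S, x ≤ u

/-- Information system with witnesses (Definition 3.1). -/
structure IWS (A : Type*) where
  Δ : A
  Con : A → Finset A → Prop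
  ent : A → Finset A → A → Prop
  entCon : ∀ i X a, ent i X a → Con i X
  ax1 : ∀ i, Con i {i}
  ax2 : ∀ i X Y, Y ⊆ X → Con i X → Con i Y
  ax3 : ∀ i, ent i ∅ Δ
  ax4 : ∀ i X Y, Con i X → (∀ a ∈ Y, ent i X a) → Con i Y
  ax5 : ∀ i X Y a, Con i X → Con i Y → X ⊆ Y → ent i X a → ent i Y a
  ax6 : ∀ i X Y a, Con i X → (∀ b ∈ Y, ent i X b) → ent i Y a → ent i X a
  ax7 : ∀ i X a, ent i X a → ∃ Z, Con i Z ∧ (∀ z ∈ Z, ent i X z) ∧ ent i Z a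
  ax8 : ∀ i X Y, Con i X → (∀ y ∈ Y, ent i X y) → ∃ e, ent i X e ∧ Con e Y
  ax9 : ∀ i j, Con j {i} → ∀ X, Con i X → Con j X
  ax10 : ∀ i j X a, Con j {i} → Con i X → ent i X a → ent j X a
  ax11 : ∀ i j X a, Con j {i} → Con i X → ent j X a → ent i X a

namespace IWS

variable {A : Type*}

/-- A state of an information system with witnesses (Definition 3.5):
finitely consistent, entailment-closed and derivable. -/
def state (S : IWS A) (x : Set A) : Prop :=
  (∀ F : Finset A, ↑F ⊆ x → ∃ i ∈ x, S.Con i F) ∧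
  (∀ i ∈ x, ∀ X : Finset A, ↑X ⊆ x → ∀ a, S.Con i X → S.ent i X a → a ∈ x) ∧
  (∀ a ∈ x, ∃ i ∈ x, ∃ X : Finset A, ↑X ⊆ x ∧ S.Con i X ∧ S.ent i X a)

/-- X-equivalence of witnesses (Definition 5.1). -/
def weq (S : IWS A) (X : Finset A) (i j : A) : Prop :=
  ∃ (n : ℕ) (a k : ℕ → A), a 0 = i ∧ a n = j ∧
    ∀ ν, 1 ≤ ν → ν ≤ n →
      S.Con (a (ν - 1)) X ∧ S.Con (a ν) X ∧
      S.Con (k ν) {a (ν - 1)} ∧ S.Con (k ν) {a ν}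

end IWS

/-- Approximable mappings between information systems with witnesses (Definition 4.1). -/
structure AppMap {A A' : Type*} (S : IWS A) (S' : IWS A') where
  rel : A → Finset A → A' → Prop
  relCon : ∀ i X b, rel i X b → S.Con i X
  am1 : rel S.Δ ∅ S'.Δ
  am2 : ∀ i X X' b, S.Con i X → S.Con i X' → X ⊆ X' → rel i X b → rel i X' b
  am3 : ∀ i X X' b, S.Con i X → (∀ a ∈ X', S.ent i X a) → rel i X' b → rel i X b
  am4 : ∀ i X b, S.Con i X → rel i X b →
    ∃ U, S.Con i U ∧ (∀ u ∈ U, S.ent i X u) ∧ rel i U b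
  am5 : ∀ i X k Y b, S.Con i X → S'.Con k Y → rel i X k → (∀ y ∈ Y, rel i X y) →
    S'.ent k Y b → rel i X b
  am6 : ∀ i X b, S.Con i X → rel i X b →
    ∃ d V, S'.Con d V ∧ rel i X d ∧ (∀ v ∈ V, rel i X v) ∧ S'.ent d V b
  am7 : ∀ i X F, S.Con i X → (∀ c ∈ F, rel i X c) → ∃ e, rel i X e ∧ S'.Con e F
  am8 : ∀ i j X b, S.Con j {i} → S.Con i X → rel i X b → rel j X b
  am9 : ∀ i j X b, S.Con j {i} → S.Con i X → rel j X b → rel i X b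

namespace IWS

variable {A A' : Type*} (S : IWS A)

theorem con_singleton_of_ent {i c : A} {X : Finset A} (h : S.ent i X c) : S.Con i {c} :=
  S.ax4 i X {c} (S.entCon i X c h) (by simpa using h)

theorem con_empty (i : A) : S.Con i ∅ :=
  S.ax2 i {i} ∅ (Finset.empty_subset _) (S.ax1 i)

/-- Condition (4) of an approximable mapping. -/
def LeftInterpolating (rel : A → Finset A → A' → Prop) : Prop :=
  ∀ i (X : Finset A) b, S.Con i X → rel i X b →
    ∃ U, S.Con i U ∧ (∀ u ∈ U, S.ent i X u) ∧ rel i U b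

/-- Condition (9) of an approximable mapping. -/
def Conservative (rel : A → Finset A → A' → Prop) : Prop :=
  ∀ i j (X : Finset A) b, S.Con j {i} → S.Con i X → rel j X b → rel i X b

def ExtendedLeftInterpolating (rel : A → Finset A → A' → Prop) : Prop :=
  ∀ i (X : Finset A) (F : Finset A'), S.Con i X → (∀ b ∈ F, rel i X b) →
    ∃ c U, S.Con c U ∧ S.ent i X c ∧ (∀ u ∈ U, S.ent i X u) ∧ ∀ b ∈ F, rel c U b

variable {S} {rel : A → Finset A → A' → Prop}

theorem LeftInterpolating.exists_common_interpolant
    (h2 : ∀ i (X X' : Finset A) b, S.Con i X → S.Con i X' → X ⊆ X' →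
      rel i X b → rel i X' b)
    (h4 : S.LeftInterpolating rel) {i : A} {X : Finset A} (hX : S.Con i X)
    (F : Finset A') (hF : ∀ b ∈ F, rel i X b) :
    ∃ U, S.Con i U ∧ (∀ u ∈ U, S.ent i X u) ∧ ∀ b ∈ F, rel i U b := by
  classical
  induction F using Finset.induction_on with
  | empty => exact ⟨∅, S.con_empty i, by simp, by simp⟩
  | insert b F _ ih =>
    obtain ⟨V, hV, hXV, hVb⟩ := h4 i X b hX (hF b (Finset.mem_insert_self b F))
    obtain ⟨W, hW, hXW, hWF⟩ := ih fun b' hb' => hF b' (Finset.mem_insert_of_mem hb')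
    have hXU : ∀ u ∈ V ∪ W, S.ent i X u := by
      simpa only [Finset.forall_mem_union] using ⟨hXV, hXW⟩
    have hU : S.Con i (V ∪ W) := S.ax4 i X _ hX hXU
    refine ⟨V ∪ W, hU, hXU, ?_⟩
    rintro b' hb'
    rcases Finset.mem_insert.mp hb' with rfl | hb'
    · exact h2 i V _ b' hV hU Finset.subset_union_left hVb
    · exact h2 i W _ b' hW hU Finset.subset_union_right (hWF b' hb')

theorem extendedLeftInterpolating_of_leftInterpolating_of_conservative
    (h2 : ∀ i (X X' : Finset A) b, S.Con i X → S.Con i X' → X ⊆ X' →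
      rel i X b → rel i X' b)
    (h4 : S.LeftInterpolating rel) (h9 : S.Conservative rel) :
    S.ExtendedLeftInterpolating rel := by
  intro i X F hX hF
  obtain ⟨U, -, hXU, hUF⟩ := h4.exists_common_interpolant h2 hX F hF
  obtain ⟨e, hXe, heU⟩ := S.ax8 i X U hX hXU
  exact ⟨e, U, heU, hXe, hXU, fun b hb =>
    h9 e i U b (S.con_singleton_of_ent hXe) heU (hUF b hb)⟩

theorem ExtendedLeftInterpolating.leftInterpolating
    (h8 : ∀ i j (X : Finset A) b, S.Con j {i} → S.Con i X → rel i X b → rel j X b)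
    (hE : S.ExtendedLeftInterpolating rel) : S.LeftInterpolating rel := by
  intro i X b hX hXb
  obtain ⟨c, U, hcU, hXc, hXU, hUb⟩ := hE i X {b} hX (by simpa using hXb)
  exact ⟨U, S.ax4 i X U hX hXU, hXU,
    h8 c i U b (S.con_singleton_of_ent hXc) hcU (hUb b (Finset.mem_singleton_self b))⟩

theorem ExtendedLeftInterpolating.conservative
    (h3 : ∀ i (X X' : Finset A) b, S.Con i X → (∀ a ∈ X', S.ent i X a) →
      rel i X' b → rel i X b)
    (h8 : ∀ i j (X : Finset A) b, S.Con j {i} → S.Con i X → rel i X b → rel j X b)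
    (hE : S.ExtendedLeftInterpolating rel) : S.Conservative rel := by
  intro i j X b hji hiX hjXb
  obtain ⟨c, U, hcU, hjXc, hjXU, hUb⟩ := hE j X {b} (S.ax9 i j hji X hiX) (by simpa using hjXb)
  have hiXc : S.ent i X c := S.ax11 i j X c hji hiX hjXc
  have hiXU : ∀ u ∈ U, S.ent i X u := fun u hu => S.ax11 i j X u hji hiX (hjXU u hu)
  exact h3 i X U b hiX hiXU
    (h8 c i U b (S.con_singleton_of_ent hiXc) hcU (hUb b (Finset.mem_singleton_self b)))

end IWS

theorem left_rules_equiv_general {A A' : Type*} (S : IWS A)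
    (rel : A → Finset A → A' → Prop)
    (h2 : ∀ i (X X' : Finset A) b, S.Con i X → S.Con i X' → X ⊆ X' →
      rel i X b → rel i X' b)
    (h3 : ∀ i (X X' : Finset A) b, S.Con i X → (∀ a ∈ X', S.ent i X a) →
      rel i X' b → rel i X b)
    (h8 : ∀ i j (X : Finset A) b, S.Con j {i} → S.Con i X →
      rel i X b → rel j X b) :
    ((∀ i (X : Finset A) b, S.Con i X → rel i X b →
        ∃ U, S.Con i U ∧ (∀ u ∈ U, S.ent i X u) ∧ rel i U b) ∧
     (∀ i j (X : Finset A) b, S.Con j {i} → S.Con i X →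
        rel j X b → rel i X b)) ↔
    (∀ i (X : Finset A) (F : Finset A'), S.Con i X → (∀ b ∈ F, rel i X b) →
      ∃ c U, S.Con c U ∧ S.ent i X c ∧ (∀ u ∈ U, S.ent i X u) ∧
        ∀ b ∈ F, rel c U b) :=
  ⟨fun ⟨h4, h9⟩ => IWS.extendedLeftInterpolating_of_leftInterpolating_of_conservative h2 h4 h9,
    fun hE => ⟨IWS.ExtendedLeftInterpolating.leftInterpolating h8 hE,
      IWS.ExtendedLeftInterpolating.conservative h3 h8 hE⟩⟩

/-- Lemma 4.2: left interpolation plus conservativity are together equivalent to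
the extended left interpolation rule. -/
theorem left_rules_equiv {A A' : Type*} (S : IWS A) (S' : IWS A')
    (rel : A → Finset A → A' → Prop)
    (h2 : ∀ i (X X' : Finset A) b, S.Con i X → S.Con i X' → X ⊆ X' →
      rel i X b → rel i X' b)
    (h3 : ∀ i (X X' : Finset A) b, S.Con i X → (∀ a ∈ X', S.ent i X a) →
      rel i X' b → rel i X b)
    (h8 : ∀ i j (X : Finset A) b, S.Con j {i} → S.Con i X →
      rel i X b → rel j X b) :
    ((∀ i (X : Finset A) b, S.Con i X → rel i X b →
        ∃ U, S.Con i U ∧ (∀ u ∈ U, S.ent i X u) ∧ rel i U b) ∧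
     (∀ i j (X : Finset A) b, S.Con j {i} → S.Con i X →
        rel j X b → rel i X b)) ↔
    (∀ i (X : Finset A) (F : Finset A'), S.Con i X → (∀ b ∈ F, rel i X b) →
      ∃ c U, S.Con c U ∧ S.ent i X c ∧ (∀ u ∈ U, S.ent i X u) ∧
        ∀ b ∈ F, rel c U b) :=
  left_rules_equiv_general S rel h2 h3 h8
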